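/- arXiv:2008.03942 — 7 statements merged into one kernel-verified Lean document; each statement's English description precedes it below -/
import Mathlib

section
/- Let β, s, μ > 0, let P ≥ 1, and let ν ∈ ℝ^P. If x* minimizes F(x) = −β·log(Σᵢ xᵢ) + s/(Σᵢ xᵢ) + (μ/2)·‖x − ν‖² over the set {x ∈ ℝ^P : xᵢ ≥ 0 for all i, and Σᵢ xᵢ > 0}, then there exists ζ > 0 such that x*ᵢ = max(0, νᵢ + ζ) for every i, and μζ = β/S + s/S² where S = Σᵢ max(0, νᵢ + ζ). -/
/-!
Perturbing one coordinate of the minimizer `x*` within `[0, ∞)` gives a one-dimensional problem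
whose derivative at `x*ᵢ` is `μ (x*ᵢ - νᵢ) - (β / S + s / S²) = μ (x*ᵢ - (νᵢ + ζ))` with
`S = Σ x*` and `ζ = (β / S + s / S²) / μ`. This derivative is nonnegative, and vanishes when
`x*ᵢ > 0`, which is exactly `x*ᵢ = max 0 (νᵢ + ζ)`. Summing recovers `S` in terms of `ζ`.
-/

open Finset Function Filter Topology

variable {ι : Type*} [Fintype ι]

noncomputable def xSubproblemObjective (β s μ : ℝ) (ν x : ι → ℝ) : ℝ :=
  -β * Real.log (∑ i, x i) + s / (∑ i, x i) + (μ / 2) * ∑ i, (x i - ν i) ^ 2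

def feasibleSet (ι : Type*) [Fintype ι] : Set (ι → ℝ) :=
  {x | (∀ i, 0 ≤ x i) ∧ 0 < ∑ i, x i}

theorem eq_max_zero_of_le_of_pos_imp_eq {c y : ℝ} (hc : 0 ≤ c) (hy : y ≤ c)
    (hcy : 0 < c → c = y) : c = max 0 y := by
  rcases hc.eq_or_lt with rfl | hc
  · exact (max_eq_left hy).symm
  · rw [hcy hc, max_eq_right (hcy hc ▸ hc.le)]

theorem IsLocalMinOn.hasDerivAt_nonneg_of_Ici {g : ℝ → ℝ} {a c d : ℝ}
    (h : IsLocalMinOn g (Set.Ici a) c) (hc : a ≤ c) (hg : HasDerivAt g d c) : 0 ≤ d := by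
  have hsegment : segment ℝ c (c + 1) ⊆ Set.Ici a := fun _ ht =>
    hc.trans (segment_subset_Icc (by linarith) ht).1
  simpa using h.hasFDerivWithinAt_nonneg hg.hasFDerivAt.hasFDerivWithinAt
    (mem_posTangentConeAt_of_segment_subset hsegment)

variable [DecidableEq ι]

theorem hasDerivAt_xSubproblemObjective_update (β s μ : ℝ) (ν : ι → ℝ) {x : ι → ℝ}
    (hx : ∑ j, x j ≠ 0) (i : ι) :
    HasDerivAt (fun t => xSubproblemObjective β s μ ν (update x i t))
      (μ * (x i - ν i) - (β / ∑ j, x j + s / (∑ j, x j) ^ 2)) (x i) := by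
  have hcoord (j : ι) :
      HasDerivAt (fun t => update x i t j) ((Pi.single i 1 : ι → ℝ) j) (x i) :=
    hasDerivAt_pi.1 (hasDerivAt_update x i (x i)) j
  have hsum : HasDerivAt (fun t => ∑ j, update x i t j) 1 (x i) := by
    simpa using HasDerivAt.fun_sum (u := univ) fun j _ => hcoord j
  have hsq : HasDerivAt (fun t => ∑ j, (update x i t j - ν j) ^ 2) (2 * (x i - ν i)) (x i) :=
    (HasDerivAt.fun_sum (u := univ) fun j _ => ((hcoord j).sub_const (ν j)).fun_pow 2).congr_deriv
      (by simp [Pi.single_apply])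
  have hx' : ∑ j, update x i (x i) j ≠ 0 := by simpa using hx
  refine (((hsum.log hx').const_mul (-β)).add ((hasDerivAt_const _ s).div hsum hx')).add
    (hsq.const_mul (μ / 2)) |>.congr_deriv ?_
  simp only [update_eq_self]
  field_simp
  ring

theorem isLocalMinOn_update_of_isMinOn {F : (ι → ℝ) → ℝ} {x : ι → ℝ}
    (hmin : IsMinOn F (feasibleSet ι) x) (hx : x ∈ feasibleSet ι) (i : ι) :
    IsLocalMinOn (fun t => F (update x i t)) (Set.Ici 0) (x i) := by
  have hcont : Continuous fun t => ∑ j, update x i t j := by fun_prop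
  have hsum_pos : ∀ᶠ t in 𝓝 (x i), 0 < ∑ j, update x i t j :=
    continuousAt_const.eventually_lt hcont.continuousAt (by simpa using hx.2)
  filter_upwards [nhdsWithin_le_nhds hsum_pos, self_mem_nhdsWithin] with t ht hti
  rw [update_eq_self]
  refine hmin ⟨fun j => ?_, ht⟩
  rcases eq_or_ne j i with rfl | hj
  · simpa using hti
  · simpa [hj] using hx.1 j

theorem eq_max_zero_of_isMinOn_xSubproblemObjective {β s μ : ℝ} {ν x : ι → ℝ} (hμ : 0 < μ)
    (hmin : IsMinOn (xSubproblemObjective β s μ ν) (feasibleSet ι) x)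
    (hx : x ∈ feasibleSet ι) (i : ι) :
    x i = max 0 (ν i + (β / ∑ j, x j + s / (∑ j, x j) ^ 2) / μ) := by
  set ζ := (β / ∑ j, x j + s / (∑ j, x j) ^ 2) / μ
  have hderiv : HasDerivAt (fun t => xSubproblemObjective β s μ ν (update x i t))
      (μ * (x i - (ν i + ζ))) (x i) := by
    convert hasDerivAt_xSubproblemObjective_update β s μ ν hx.2.ne' i using 1
    simp only [ζ]
    field_simp
    ring
  have hloc := isLocalMinOn_update_of_isMinOn hmin hx i
  refine eq_max_zero_of_le_of_pos_imp_eq (hx.1 i) ?_ fun hxi => ?_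
  · have := (mul_nonneg_iff_of_pos_left hμ).1 (hloc.hasDerivAt_nonneg_of_Ici (hx.1 i) hderiv)
    linarith
  · have hzero := (hloc.isLocalMin (Ici_mem_nhds hxi)).hasDerivAt_eq_zero hderiv
    have := (mul_eq_zero.1 hzero).resolve_left hμ.ne'
    linarith

theorem stmt0_general (β s μ : ℝ) (hβ : 0 < β) (hs : 0 < s) (hμ : 0 < μ)
    (P : ℕ) (ν : Fin P → ℝ) (xstar : Fin P → ℝ)
    (hpos : ∀ i, 0 ≤ xstar i) (hsum : 0 < ∑ i, xstar i)
    (hmin : ∀ x : Fin P → ℝ, (∀ i, 0 ≤ x i) → 0 < ∑ i, x i →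
      (-β * Real.log (∑ i, xstar i) + s / (∑ i, xstar i)
          + (μ / 2) * ∑ i, (xstar i - ν i) ^ 2)
        ≤ (-β * Real.log (∑ i, x i) + s / (∑ i, x i)
          + (μ / 2) * ∑ i, (x i - ν i) ^ 2)) :
    ∃ ζ : ℝ, 0 < ζ ∧ (∀ i, xstar i = max 0 (ν i + ζ)) ∧
      μ * ζ = β / (∑ i, max 0 (ν i + ζ)) + s / (∑ i, max 0 (ν i + ζ)) ^ 2 := by
  have hmin' : IsMinOn (xSubproblemObjective β s μ ν) (feasibleSet (Fin P)) xstar :=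
    isMinOn_iff.2 fun x hx => hmin x hx.1 hx.2
  have hcoord := eq_max_zero_of_isMinOn_xSubproblemObjective hμ hmin' ⟨hpos, hsum⟩
  refine ⟨_, by positivity, hcoord, ?_⟩
  rw [← Finset.sum_congr rfl fun i _ => hcoord i]
  field_simp

/-- Lemma 1 of the paper: characterization of the minimizer of the x-subproblem
of the ADMM for NUM, with utility `U(t) = β log t − s/t`. -/
theorem stmt0 (β s μ : ℝ) (hβ : 0 < β) (hs : 0 < s) (hμ : 0 < μ)
    (P : ℕ) (hP : 1 ≤ P) (ν : Fin P → ℝ) (xstar : Fin P → ℝ)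
    (hpos : ∀ i, 0 ≤ xstar i) (hsum : 0 < ∑ i, xstar i)
    (hmin : ∀ x : Fin P → ℝ, (∀ i, 0 ≤ x i) → 0 < ∑ i, x i →
      (-β * Real.log (∑ i, xstar i) + s / (∑ i, xstar i)
          + (μ / 2) * ∑ i, (xstar i - ν i) ^ 2)
        ≤ (-β * Real.log (∑ i, x i) + s / (∑ i, x i)
          + (μ / 2) * ∑ i, (x i - ν i) ^ 2)) :
    ∃ ζ : ℝ, 0 < ζ ∧ (∀ i, xstar i = max 0 (ν i + ζ)) ∧
      μ * ζ = β / (∑ i, max 0 (ν i + ζ)) + s / (∑ i, max 0 (ν i + ζ)) ^ 2 :=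
  stmt0_general β s μ hβ hs hμ P ν xstar hpos hsum hmin
end

section
/- Let β, s, μ > 0, let P ≥ 1, and let ν ∈ ℝ^P. Define S(ζ) = Σᵢ max(0, νᵢ + ζ). Then there exists a unique ζ > 0 such that S(ζ) > 0 and μ·ζ·S(ζ)² = β·S(ζ) + s (equivalently, μζ = β/S(ζ) + s/S(ζ)²). -/
/-!
Write `F(ζ) = μ ζ S(ζ)² - β S(ζ) - s`. Since `S ≥ 0`, `F(0) = -β S(0) - s < 0`, while `S → ∞` forces
`F(ζ) ≥ 0` for large `ζ`; the intermediate value theorem gives a root, and any root has `ζ > 0` and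
`S(ζ) > 0`. Where `S > 0` the equation reads `μ ζ = β / S(ζ) + s / S(ζ)²`, whose left side is strictly
increasing and whose right side is nonincreasing in `ζ`, so the root is unique.
-/

open Finset Filter

section Stationary

variable {β s μ : ℝ} {S : ℝ → ℝ}

lemma stationary_iff_eq_div {ζ t : ℝ} (ht : 0 < t) :
    μ * ζ * t ^ 2 = β * t + s ↔ μ * ζ = β / t + s / t ^ 2 := by
  field_simp

lemma le_of_stationary (hβ : 0 ≤ β) (hs : 0 ≤ s) (hμ : 0 < μ) (hmono : Monotone S) {x y : ℝ}
    (hSx : 0 < S x) (hx : μ * x * S x ^ 2 = β * S x + s)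
    (hSy : 0 < S y) (hy : μ * y * S y ^ 2 = β * S y + s) : x ≤ y := by
  by_contra! hyx
  rw [stationary_iff_eq_div hSx] at hx
  rw [stationary_iff_eq_div hSy] at hy
  have hS : S y ≤ S x := hmono hyx.le
  have : β / S x + s / S x ^ 2 ≤ β / S y + s / S y ^ 2 := by gcongr
  nlinarith

lemma exists_stationary (hβ : 0 < β) (hs : 0 < s) (hμ : 0 < μ) (hcont : Continuous S)
    (hnn : 0 ≤ S) (htop : Tendsto S atTop atTop) :
    ∃ ζ, 0 < ζ ∧ 0 < S ζ ∧ μ * ζ * S ζ ^ 2 = β * S ζ + s := by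
  set F : ℝ → ℝ := fun ζ => μ * ζ * S ζ ^ 2 - β * S ζ - s
  have hF : Continuous F := by fun_prop
  have hF0 : F 0 < 0 := by
    have : 0 ≤ S 0 := hnn 0
    simp only [F]
    nlinarith
  obtain ⟨b, hb0, hbμ, hSb⟩ : ∃ b, 0 ≤ b ∧ β + s ≤ μ * b ∧ 1 ≤ S b :=
    ((eventually_ge_atTop 0).and
      (((tendsto_id.const_mul_atTop hμ).eventually_ge_atTop (β + s)).and
        (htop.eventually_ge_atTop 1))).exists
  have hFb : 0 ≤ F b := by
    simp only [F]
    nlinarith [mul_le_mul_of_nonneg_right hbμ (sq_nonneg (S b)),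
      mul_nonneg hβ.le (mul_nonneg (by linarith : 0 ≤ S b) (sub_nonneg.2 hSb)),
      mul_nonneg hs.le (mul_nonneg (by linarith : 0 ≤ S b + 1) (sub_nonneg.2 hSb))]
  obtain ⟨ζ, hζ, hFζ⟩ := intermediate_value_Icc hb0 hF.continuousOn ⟨hF0.le, hFb⟩
  have heq : μ * ζ * S ζ ^ 2 = β * S ζ + s := by
    simp only [F] at hFζ
    linarith
  have hζ0 : 0 < ζ := lt_of_le_of_ne hζ.1 (by rintro rfl; exact hF0.ne hFζ)
  have hSζ : 0 < S ζ := by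
    refine lt_of_le_of_ne (hnn ζ) fun h => ?_
    rw [← h] at heq
    linarith
  exact ⟨ζ, hζ0, hSζ, heq⟩

theorem existsUnique_stationary (hβ : 0 < β) (hs : 0 < s) (hμ : 0 < μ) (hcont : Continuous S)
    (hmono : Monotone S) (hnn : 0 ≤ S) (htop : Tendsto S atTop atTop) :
    ∃! ζ, 0 < ζ ∧ 0 < S ζ ∧ μ * ζ * S ζ ^ 2 = β * S ζ + s := by
  obtain ⟨ζ, hζ, hSζ, heq⟩ := exists_stationary hβ hs hμ hcont hnn htop
  refine ⟨ζ, ⟨hζ, hSζ, heq⟩, fun y ⟨_, hSy, hy⟩ => le_antisymm ?_ ?_⟩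
  · exact le_of_stationary hβ.le hs.le hμ hmono hSy hy hSζ heq
  · exact le_of_stationary hβ.le hs.le hμ hmono hSζ heq hSy hy

end Stationary

section PositivePartSum

variable {ι : Type*} [Fintype ι] (ν : ι → ℝ)

lemma continuous_sum_max_zero_add : Continuous fun ζ : ℝ => ∑ i, max 0 (ν i + ζ) := by
  fun_prop

lemma monotone_sum_max_zero_add : Monotone fun ζ : ℝ => ∑ i, max 0 (ν i + ζ) :=
  fun _ _ h => sum_le_sum fun _ _ => max_le_max le_rfl (add_le_add_right h _)

lemma sum_max_zero_add_nonneg : 0 ≤ fun ζ : ℝ => ∑ i, max 0 (ν i + ζ) :=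
  fun _ => sum_nonneg fun _ _ => le_max_left _ _

lemma tendsto_sum_max_zero_add_atTop [Nonempty ι] :
    Tendsto (fun ζ : ℝ => ∑ i, max 0 (ν i + ζ)) atTop atTop := by
  obtain ⟨i⟩ := ‹Nonempty ι›
  refine tendsto_atTop_mono (fun ζ => ?_) (tendsto_atTop_add_const_left _ (ν i) tendsto_id)
  exact (le_max_right 0 _).trans
    (single_le_sum (f := fun j => max 0 (ν j + ζ)) (fun _ _ => le_max_left _ _) (mem_univ i))

end PositivePartSum

/-- Existence and uniqueness of the multiplier ζ in the stationarity equation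
`μ ζ S(ζ)² = β S(ζ) + s` with `S(ζ) = Σᵢ max(0, νᵢ + ζ)` (Lemma 1 of the paper). -/
theorem stmt1 (β s μ : ℝ) (hβ : 0 < β) (hs : 0 < s) (hμ : 0 < μ)
    (P : ℕ) (hP : 1 ≤ P) (ν : Fin P → ℝ) :
    ∃! ζ : ℝ, 0 < ζ ∧ 0 < (∑ i, max 0 (ν i + ζ)) ∧
      μ * ζ * (∑ i, max 0 (ν i + ζ)) ^ 2 = β * (∑ i, max 0 (ν i + ζ)) + s := by
  have : Nonempty (Fin P) := ⟨⟨0, hP⟩⟩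
  exact existsUnique_stationary hβ hs hμ (continuous_sum_max_zero_add ν)
    (monotone_sum_max_zero_add ν) (sum_max_zero_add_nonneg ν) (tendsto_sum_max_zero_add_atTop ν)
end

section
/- Let β, s, μ > 0, let P ≥ 1, let ν ∈ ℝ^P, and let i* be an index at which νᵢ attains its maximum. Consider minimizing F(x) = −β·log(Σᵢ xᵢ) + s/(Σᵢ xᵢ) + (μ/2)·‖x − ν‖² over the set {x ∈ ℝ^P : xᵢ ≥ 0 for all i, at most one coordinate of x is nonzero, and Σᵢ xᵢ > 0}. Then this problem has a global minimizer x* with x*ⱼ = 0 for all j ≠ i* and x*_{i*} equal to the largest real root of the cubic equation μ·a³ − μ·ν_{i*}·a² − β·a − s = 0. -/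
/-!
On a one-sparse point `x = t • eᵢ` the objective is `t ↦ -β log t + s/t + (μ/2)(t² - 2tνᵢ + ‖ν‖²)`,
so for fixed `t` it is smallest when `νᵢ` is largest. For `i = i*` it is, up to a constant, the
function `g(t) = -β log t + s/t + (μ/2)(t - ν₀)²`, which is convex on `t > 0` (each summand lies
above its tangent lines) with `t² g'(t) = p(t) := μt³ - μν₀t² - βt - s`. Since `p(0) = -s < 0`,
`p` has a positive root `a`; it is a stationary point, hence a minimizer, of `g`. Finally
`a² p(b) - b² p(a) = (b - a)(μa²b² + βab + s(a + b))` shows that `a` is the only positive root.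
-/

open Finset

noncomputable section

def stationaryCubic (β s μ ν₀ a : ℝ) : ℝ := μ * a ^ 3 - μ * ν₀ * a ^ 2 - β * a - s

def scalarObjective (β s μ ν₀ t : ℝ) : ℝ := -β * Real.log t + s / t + (μ / 2) * (t - ν₀) ^ 2

def objective {ι : Type*} [Fintype ι] (β s μ : ℝ) (ν x : ι → ℝ) : ℝ :=
  -β * Real.log (∑ i, x i) + s / (∑ i, x i) + (μ / 2) * ∑ i, (x i - ν i) ^ 2

end

section Scalar

variable {β s μ ν₀ : ℝ}

theorem exists_pos_stationaryCubic_eq_zero (hs : 0 < s) (hμ : 0 < μ) :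
    ∃ a, 0 < a ∧ stationaryCubic β s μ ν₀ a = 0 := by
  set R := 1 + |ν₀| + (|β| + s) / μ
  have hR : 1 ≤ R := by
    have : 0 ≤ (|β| + s) / μ := by positivity
    linarith [abs_nonneg ν₀]
  have hRν : |β| + s ≤ μ * (R - ν₀) := by
    have : (|β| + s) / μ ≤ R - ν₀ := by linarith [le_abs_self ν₀]
    rwa [div_le_iff₀' hμ] at this
  have hpR : 0 ≤ stationaryCubic β s μ ν₀ R := by
    have : R * (|β| + s) ≤ R ^ 2 * (μ * (R - ν₀)) :=
      calc R * (|β| + s) ≤ R ^ 2 * (|β| + s) :=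
            mul_le_mul_of_nonneg_right (by nlinarith) (by positivity)
        _ ≤ R ^ 2 * (μ * (R - ν₀)) := by gcongr
    unfold stationaryCubic
    nlinarith [le_abs_self β]
  have h0 : stationaryCubic β s μ ν₀ 0 < 0 := by simpa [stationaryCubic] using hs
  have hcont : Continuous (stationaryCubic β s μ ν₀) := by unfold stationaryCubic; fun_prop
  obtain ⟨a, ⟨ha0, -⟩, ha⟩ :=
    intermediate_value_Icc (by linarith) hcont.continuousOn ⟨h0.le, hpR⟩
  refine ⟨a, ha0.lt_of_ne ?_, ha⟩
  rintro rfl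
  exact h0.ne ha

theorem le_of_stationaryCubic_eq_zero (hβ : 0 ≤ β) (hs : 0 < s) (hμ : 0 ≤ μ) {a b : ℝ}
    (ha : 0 < a) (hpa : stationaryCubic β s μ ν₀ a = 0) (hpb : stationaryCubic β s μ ν₀ b = 0) :
    b ≤ a := by
  rcases le_or_gt b 0 with hb | hb
  · linarith
  have hfactor : (b - a) * (μ * a ^ 2 * b ^ 2 + β * a * b + s * (a + b)) = 0 := by
    unfold stationaryCubic at hpa hpb
    linear_combination a ^ 2 * hpb - b ^ 2 * hpa
  have hpos : 0 < μ * a ^ 2 * b ^ 2 + β * a * b + s * (a + b) := by positivity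
  linarith [(mul_eq_zero.1 hfactor).resolve_right hpos.ne']

theorem scalarObjective_le_of_stationaryCubic_eq_zero (hβ : 0 ≤ β) (hs : 0 ≤ s) (hμ : 0 ≤ μ)
    {a t : ℝ} (ha : 0 < a) (hpa : stationaryCubic β s μ ν₀ a = 0) (ht : 0 < t) :
    scalarObjective β s μ ν₀ a ≤ scalarObjective β s μ ν₀ t := by
  have hlog : Real.log t - Real.log a ≤ (t - a) / a := by
    rw [← Real.log_div ht.ne' ha.ne', sub_div, div_self ha.ne']
    exact Real.log_le_sub_one_of_pos (div_pos ht ha)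
  have hrec : s / a - (t - a) * (s / a ^ 2) ≤ s / t := by
    have : s / t - (s / a - (t - a) * (s / a ^ 2)) = s * (t - a) ^ 2 / (a ^ 2 * t) := by
      field_simp; ring
    have : 0 ≤ s * (t - a) ^ 2 / (a ^ 2 * t) := by positivity
    linarith
  have hstat : μ * (a - ν₀) = β / a + s / a ^ 2 := by
    unfold stationaryCubic at hpa
    field_simp
    linear_combination hpa
  have hquad : (μ / 2) * ((t - ν₀) ^ 2 - (a - ν₀) ^ 2)
      = (μ / 2) * (t - a) ^ 2 + (t - a) * (β / a + s / a ^ 2) := by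
    rw [← hstat]; ring
  have hβlog : β * (Real.log t - Real.log a) ≤ β * ((t - a) / a) :=
    mul_le_mul_of_nonneg_left hlog hβ
  unfold scalarObjective
  linear_combination hβlog + hrec - hquad + mul_nonneg hμ (sq_nonneg (t - a)) / 2

end Scalar

section Sparse

variable {ι : Type*} [DecidableEq ι]

theorem eq_single_of_subsingleton {M : Type*} [Zero M] {x : ι → M}
    (hx : {j | x j ≠ 0}.Subsingleton) {i : ι} (hi : x i ≠ 0) : x = Pi.single i (x i) := by
  funext j
  by_cases hj : j = i
  · subst hj; simp
  · rw [Pi.single_eq_of_ne hj]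
    by_contra hxj
    exact hj (hx hxj hi)

variable [Fintype ι] {β s μ : ℝ} {ν : ι → ℝ}

theorem objective_single (i : ι) (t : ℝ) :
    objective β s μ ν (Pi.single i t)
      = scalarObjective β s μ (ν i) t + (μ / 2) * (∑ j, ν j ^ 2 - ν i ^ 2) := by
  have hsq : ∀ j, ((Pi.single i t : ι → ℝ) j - ν j) ^ 2
      = ν j ^ 2 + (Pi.single i ((t - ν i) ^ 2 - ν i ^ 2) : ι → ℝ) j := by
    intro j
    by_cases hj : j = i
    · subst hj; simp
    · simp [Pi.single_eq_of_ne hj]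
  simp only [objective, scalarObjective, hsq, sum_add_distrib, sum_pi_single', mem_univ,
    if_true]
  ring

theorem objective_single_le_of_le (hμ : 0 ≤ μ) {i k : ι} (hik : ν i ≤ ν k) {t : ℝ}
    (ht : 0 ≤ t) : objective β s μ ν (Pi.single k t) ≤ objective β s μ ν (Pi.single i t) := by
  rw [objective_single, objective_single]
  unfold scalarObjective
  nlinarith [mul_nonneg hμ (mul_nonneg ht (sub_nonneg.2 hik))]

end Sparse

theorem stmt4_general (β s μ : ℝ) (hβ : 0 < β) (hs : 0 < s) (hμ : 0 < μ)
    (P : ℕ) (ν : Fin P → ℝ)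
    (istar : Fin P) (histar : ∀ j, ν j ≤ ν istar) :
    ∃ xstar : Fin P → ℝ,
      ((∀ i, 0 ≤ xstar i) ∧ {i | xstar i ≠ 0}.Subsingleton ∧ 0 < ∑ i, xstar i) ∧
      (∀ x : Fin P → ℝ, (∀ i, 0 ≤ x i) → {i | x i ≠ 0}.Subsingleton →
        0 < ∑ i, x i →
        (-β * Real.log (∑ i, xstar i) + s / (∑ i, xstar i)
            + (μ / 2) * ∑ i, (xstar i - ν i) ^ 2)
          ≤ (-β * Real.log (∑ i, x i) + s / (∑ i, x i)
            + (μ / 2) * ∑ i, (x i - ν i) ^ 2)) ∧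
      (∀ j, j ≠ istar → xstar j = 0) ∧
      μ * (xstar istar) ^ 3 - μ * ν istar * (xstar istar) ^ 2
          - β * (xstar istar) - s = 0 ∧
      ∀ b : ℝ, μ * b ^ 3 - μ * ν istar * b ^ 2 - β * b - s = 0 →
        b ≤ xstar istar := by
  obtain ⟨a, ha, hpa⟩ := exists_pos_stationaryCubic_eq_zero (β := β) (ν₀ := ν istar) hs hμ
  refine ⟨Pi.single istar a, ⟨?_, Set.subsingleton_singleton.anti Pi.support_single_subset,
    by simpa using ha⟩, ?_, fun j hj => by simp [hj], by simpa [stationaryCubic] using hpa,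
    fun b hb => by simpa using le_of_stationaryCubic_eq_zero hβ.le hs hμ.le ha hpa hb⟩
  · exact (Pi.single_nonneg.2 ha.le : 0 ≤ (Pi.single istar a : Fin P → ℝ))
  intro x _ hx hxpos
  obtain ⟨i, hi⟩ : ∃ i, x i ≠ 0 := by
    by_contra! h
    simp [h] at hxpos
  have hxi := eq_single_of_subsingleton hx hi
  set t := x i
  rw [hxi] at hxpos ⊢
  have ht : 0 < t := by simpa using hxpos
  change objective β s μ ν _ ≤ objective β s μ ν _
  calc objective β s μ ν (Pi.single istar a)
      ≤ objective β s μ ν (Pi.single istar t) := by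
        rw [objective_single, objective_single]
        gcongr
        exact scalarObjective_le_of_stationaryCubic_eq_zero hβ.le hs.le hμ.le ha hpa ht
    _ ≤ objective β s μ ν (Pi.single i t) := objective_single_le_of_le hμ.le (histar i) ht.le

/-- Lemma 2 of the paper: the cardinality-one case of the x-subproblem. The problem
has a global minimizer supported on a coordinate `i*` where ν is maximal, whose value
is the largest real root of the cubic `μ a³ − μ ν_{i*} a² − β a − s = 0`. -/
theorem stmt4 (β s μ : ℝ) (hβ : 0 < β) (hs : 0 < s) (hμ : 0 < μ)
    (P : ℕ) (hP : 1 ≤ P) (ν : Fin P → ℝ)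
    (istar : Fin P) (histar : ∀ j, ν j ≤ ν istar) :
    ∃ xstar : Fin P → ℝ,
      ((∀ i, 0 ≤ xstar i) ∧ {i | xstar i ≠ 0}.Subsingleton ∧ 0 < ∑ i, xstar i) ∧
      (∀ x : Fin P → ℝ, (∀ i, 0 ≤ x i) → {i | x i ≠ 0}.Subsingleton →
        0 < ∑ i, x i →
        (-β * Real.log (∑ i, xstar i) + s / (∑ i, xstar i)
            + (μ / 2) * ∑ i, (xstar i - ν i) ^ 2)
          ≤ (-β * Real.log (∑ i, x i) + s / (∑ i, x i)
            + (μ / 2) * ∑ i, (x i - ν i) ^ 2)) ∧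
      (∀ j, j ≠ istar → xstar j = 0) ∧
      μ * (xstar istar) ^ 3 - μ * ν istar * (xstar istar) ^ 2
          - β * (xstar istar) - s = 0 ∧
      ∀ b : ℝ, μ * b ^ 3 - μ * ν istar * b ^ 2 - β * b - s = 0 →
        b ≤ xstar istar :=
  stmt4_general β s μ hβ hs hμ P ν istar histar
end

section
/- Let α, ρ > 0, let c ∈ ℝ^L with cₗ > 0 for all l, and let θ ∈ ℝ^L. For t ∈ [0,1], define C(t) = {y ∈ ℝ^L : 0 ≤ yₗ ≤ t·cₗ for all l}, define φ(t, y) = α·t + (ρ/2)·‖y − θ‖², define y(t) coordinatewise by y(t)ₗ = min(t·cₗ, max(0, θₗ)), and define Φ(t) = φ(t, y(t)). If t* minimizes Φ over [0,1], then the pair (t*, y(t*)) minimizes φ over the set {(t, y) : t ∈ [0,1], y ∈ C(t)}, i.e., for every t' ∈ [0,1] and every y' ∈ C(t'), φ(t', y') ≥ φ(t*, y(t*)). -/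
/-!
Coordinatewise, `min (t cₗ) (max 0 θₗ)` is the nearest point of `[0, t cₗ]` to `θₗ`, so `y(t)` is
the Euclidean projection of `θ` onto the box `C(t)` and `φ(t', y') ≥ Φ(t') ≥ Φ(t*)`.
-/

open Finset

theorem sq_min_max_sub_le {a b u θ : ℝ} (hau : a ≤ u) (hub : u ≤ b) :
    (min b (max a θ) - θ) ^ 2 ≤ (u - θ) ^ 2 := by
  rcases le_total θ a with hθa | haθ
  · rw [max_eq_left hθa, min_eq_right (hau.trans hub)]
    nlinarith
  · rw [max_eq_right haθ]
    rcases le_total b θ with hbθ | hθb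
    · rw [min_eq_left hbθ]
      nlinarith
    · rw [min_eq_right hθb, sub_self, sq, zero_mul]
      exact sq_nonneg _

theorem sum_sq_min_max_sub_le {ι : Type*} [Fintype ι] {a b u : ι → ℝ} (θ : ι → ℝ)
    (hu : ∀ i, a i ≤ u i ∧ u i ≤ b i) :
    ∑ i, (min (b i) (max (a i) (θ i)) - θ i) ^ 2 ≤ ∑ i, (u i - θ i) ^ 2 :=
  sum_le_sum fun i _ => sq_min_max_sub_le (hu i).1 (hu i).2

theorem stmt7_general (L : ℕ) (α ρ : ℝ) (hρ : 0 < ρ)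
    (c : Fin L → ℝ) (θ : Fin L → ℝ)
    (tstar : ℝ)
    (hmin : ∀ t ∈ Set.Icc (0 : ℝ) 1,
      (α * tstar + (ρ / 2) * ∑ l, (min (tstar * c l) (max 0 (θ l)) - θ l) ^ 2)
        ≤ (α * t + (ρ / 2) * ∑ l, (min (t * c l) (max 0 (θ l)) - θ l) ^ 2)) :
    ∀ t' ∈ Set.Icc (0 : ℝ) 1, ∀ y' : Fin L → ℝ,
      (∀ l, 0 ≤ y' l ∧ y' l ≤ t' * c l) →
      (α * tstar + (ρ / 2) * ∑ l, (min (tstar * c l) (max 0 (θ l)) - θ l) ^ 2)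
        ≤ (α * t' + (ρ / 2) * ∑ l, (y' l - θ l) ^ 2) := by
  intro t' ht' y' hy'
  calc _ ≤ α * t' + (ρ / 2) * ∑ l, (min (t' * c l) (max 0 (θ l)) - θ l) ^ 2 := hmin t' ht'
    _ ≤ α * t' + (ρ / 2) * ∑ l, (y' l - θ l) ^ 2 := by
      gcongr α * t' + _ * ?_
      exact sum_sq_min_max_sub_le (a := fun _ => 0) θ hy'

/-- Lemma 4 of the paper (main claim): if `t*` minimizes `Φ(t) = φ(t, y(t))` over
`[0,1]`, where `y(t)ₗ = min(t cₗ, max(0, θₗ))`, then `(t*, y(t*))` minimizes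
`φ(t, y) = α t + (ρ/2)‖y − θ‖²` over `{(t, y) : t ∈ [0,1], 0 ≤ y ≤ t c}`. -/
theorem stmt7 (L : ℕ) (α ρ : ℝ) (hα : 0 < α) (hρ : 0 < ρ)
    (c : Fin L → ℝ) (hc : ∀ l, 0 < c l) (θ : Fin L → ℝ)
    (tstar : ℝ) (htstar : tstar ∈ Set.Icc (0 : ℝ) 1)
    (hmin : ∀ t ∈ Set.Icc (0 : ℝ) 1,
      (α * tstar + (ρ / 2) * ∑ l, (min (tstar * c l) (max 0 (θ l)) - θ l) ^ 2)
        ≤ (α * t + (ρ / 2) * ∑ l, (min (t * c l) (max 0 (θ l)) - θ l) ^ 2)) :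
    ∀ t' ∈ Set.Icc (0 : ℝ) 1, ∀ y' : Fin L → ℝ,
      (∀ l, 0 ≤ y' l ∧ y' l ≤ t' * c l) →
      (α * tstar + (ρ / 2) * ∑ l, (min (tstar * c l) (max 0 (θ l)) - θ l) ^ 2)
        ≤ (α * t' + (ρ / 2) * ∑ l, (y' l - θ l) ^ 2) :=
  stmt7_general L α ρ hρ c θ tstar hmin
end

section
/- Let R be an L×P real matrix with nonnegative entries such that no column of R is identically zero. Let ρ, α, β > 0, let c ∈ ℝ^L with cₗ > 0 for all l, partition the coordinates {1,…,P} into K nonempty blocks, and let sₖ > 0 for each block k. Define f(x) = Σₖ ( −β·log(Σ_{i in block k} xᵢ) + sₖ/(Σ_{i in block k} xᵢ) ) and g(y) = α·maxₗ (yₗ/cₗ). Then for every M > 0, the function (x, y, z) ↦ f(x) + g(y) + (ρ/2)·‖y − Rx + z/ρ‖² − ‖z‖²/(2ρ) is bounded below on the set {x ∈ ℝ^P : x ≥ 0 and every block sum of x is positive} × {y ∈ ℝ^L : 0 ≤ y ≤ c} × {z ∈ ℝ^L : ‖z‖ ≤ M}. In particular, for any sequences with xʲ in that feasible set, 0 ≤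 yʲ ≤ c, and ‖zʲ‖ ≤ M, the sequence of augmented Lagrangian values L_ρ(xʲ, yʲ; zʲ) = f(xʲ) + g(yʲ) + ⟨zʲ, yʲ − Rxʲ⟩ + (ρ/2)‖yʲ − Rxʲ‖² is bounded below. -/
/-!
Since `log σ ≤ σ`, the barrier `f` is at least `-β ∑ᵢ xᵢ`, and `g ≥ 0` on the box. Because `R`
is nonnegative with no zero column, `∑ᵢ xᵢ ≤ C ∑ₗ (R x)ₗ` for `x ≥ 0`, so the sum of the
entries of `w = y - R x + z/ρ` is at most a constant minus `∑ₗ (R x)ₗ`; completing the square,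
`(ρ/2) wₗ² ≥ -t wₗ - t²/(2ρ)` with `t = β C`, the penalty is at least `β ∑ᵢ xᵢ` minus a constant,
which cancels the barrier. The second claim is the first after completing the square in `z`.
-/

open Finset

theorem neg_mul_le_neg_mul_log_add_div {β s σ : ℝ} (hβ : 0 ≤ β) (hs : 0 ≤ s) (hσ : 0 < σ) :
    -(β * σ) ≤ -β * Real.log σ + s / σ := by
  have hlog : Real.log σ ≤ σ := (Real.log_le_sub_one_of_pos hσ).trans (by linarith)
  have hdiv : 0 ≤ s / σ := div_nonneg hs hσ.le
  have := mul_le_mul_of_nonneg_left hlog hβ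
  linarith

theorem neg_mul_sum_le_sum_neg_mul_log_add_div {ι κ : Type*} [Fintype ι] [Fintype κ] [DecidableEq κ]
    (blk : ι → κ) {β : ℝ} (hβ : 0 ≤ β) {s : κ → ℝ} (hs : ∀ k, 0 ≤ s k) {x : ι → ℝ}
    (hx : ∀ k, 0 < ∑ i ∈ univ.filter (fun i => blk i = k), x i) :
    -(β * ∑ i, x i) ≤ ∑ k,
      (-β * Real.log (∑ i ∈ univ.filter (fun i => blk i = k), x i)
        + s k / (∑ i ∈ univ.filter (fun i => blk i = k), x i)) := by
  rw [← sum_fiberwise univ blk x, mul_sum, ← sum_neg_distrib]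
  exact sum_le_sum fun k _ => neg_mul_le_neg_mul_log_add_div hβ (hs k) (hx k)

theorem mul_add_half_mul_sq_eq {ρ : ℝ} (hρ : ρ ≠ 0) (a b : ℝ) :
    b * a + ρ / 2 * a ^ 2 = ρ / 2 * (a + b / ρ) ^ 2 - b ^ 2 / (2 * ρ) := by
  field_simp
  ring

theorem sum_mul_add_half_mul_sum_sq_eq {ι : Type*} (s : Finset ι) {ρ : ℝ} (hρ : ρ ≠ 0)
    (a b : ι → ℝ) :
    ∑ l ∈ s, b l * a l + ρ / 2 * ∑ l ∈ s, a l ^ 2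
      = ρ / 2 * ∑ l ∈ s, (a l + b l / ρ) ^ 2 - (∑ l ∈ s, b l ^ 2) / (2 * ρ) := by
  simp only [mul_sum, sum_div, ← sum_add_distrib, ← sum_sub_distrib,
    mul_add_half_mul_sq_eq hρ]

theorem neg_mul_sum_sub_le_half_mul_sum_sq {ι : Type*} (s : Finset ι) {ρ : ℝ} (hρ : 0 < ρ)
    (t : ℝ) (w : ι → ℝ) :
    -(t * ∑ l ∈ s, w l) - #s * (t ^ 2 / (2 * ρ)) ≤ ρ / 2 * ∑ l ∈ s, w l ^ 2 := by
  have hsq := sum_mul_add_half_mul_sum_sq_eq s hρ.ne' w fun _ => t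
  have hnonneg : 0 ≤ ρ / 2 * ∑ l ∈ s, (w l + t / ρ) ^ 2 :=
    mul_nonneg (by positivity) (sum_nonneg fun _ _ => sq_nonneg _)
  simp only [sum_const, nsmul_eq_mul, ← mul_sum] at hsq
  have : #s * t ^ 2 / (2 * ρ) = #s * (t ^ 2 / (2 * ρ)) := mul_div_assoc _ _ _
  linarith

theorem Matrix.sum_mulVec_eq_sum_colSum_mul {m n : Type*} [Fintype m] [Fintype n]
    (R : Matrix m n ℝ) (x : n → ℝ) :
    ∑ l, R.mulVec x l = ∑ i, (∑ l, R l i) * x i := by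
  simp only [Matrix.mulVec, dotProduct, sum_mul]
  exact sum_comm

/-- With `C = ∑ᵢ (∑ₗ Rₗᵢ)⁻¹`, each column sum is at least `C⁻¹`. -/
theorem Matrix.exists_sum_le_mul_sum_mulVec {m n : Type*} [Fintype m] [Fintype n]
    (R : Matrix m n ℝ) (hR : ∀ l i, 0 ≤ R l i) (hcol : ∀ i, ∃ l, R l i ≠ 0) :
    ∃ C, 0 ≤ C ∧ ∀ x : n → ℝ, (∀ i, 0 ≤ x i) → ∑ i, x i ≤ C * ∑ l, R.mulVec x l := by
  have hcolSum : ∀ i, 0 < ∑ l, R l i := fun i =>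
    have ⟨l, hl⟩ := hcol i
    sum_pos' (fun l _ => hR l i) ⟨l, mem_univ l, (hR l i).lt_of_ne' hl⟩
  refine ⟨∑ i, (∑ l, R l i)⁻¹, sum_nonneg fun i _ => (inv_pos.2 (hcolSum i)).le, ?_⟩
  intro x hx
  rw [R.sum_mulVec_eq_sum_colSum_mul, mul_sum]
  refine sum_le_sum fun i _ => ?_
  have hinv : (∑ l, R l i)⁻¹ ≤ ∑ j, (∑ l, R l j)⁻¹ :=
    single_le_sum (fun j _ => (inv_pos.2 (hcolSum j)).le) (mem_univ i)
  calc x i = (∑ l, R l i)⁻¹ * ((∑ l, R l i) * x i) := by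
        rw [inv_mul_cancel_left₀ (hcolSum i).ne']
    _ ≤ (∑ j, (∑ l, R l j)⁻¹) * ((∑ l, R l i) * x i) :=
        mul_le_mul_of_nonneg_right hinv (mul_nonneg (hcolSum i).le (hx i))

/-- The quadratic penalty grows at least linearly in the mass of `x`: this is what absorbs
the `-β log` terms. -/
theorem Matrix.exists_mul_sum_add_le_half_mul_sum_sq {m n : Type*} [Fintype m] [Fintype n]
    (R : Matrix m n ℝ) (hR : ∀ l i, 0 ≤ R l i) (hcol : ∀ i, ∃ l, R l i ≠ 0)
    {ρ : ℝ} (hρ : 0 < ρ) (c : m → ℝ) (M : ℝ) {β : ℝ} (hβ : 0 ≤ β) :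
    ∃ A, ∀ (x : n → ℝ) (y z : m → ℝ), (∀ i, 0 ≤ x i) → (∀ l, y l ≤ c l) → (∀ l, z l ≤ M) →
      β * ∑ i, x i + A ≤ ρ / 2 * ∑ l, (y l - R.mulVec x l + z l / ρ) ^ 2 := by
  obtain ⟨C, hC, hmass⟩ := R.exists_sum_le_mul_sum_mulVec hR hcol
  set D := ∑ l, (c l + M / ρ)
  refine ⟨-(β * C * D) - Fintype.card m * ((β * C) ^ 2 / (2 * ρ)), ?_⟩
  intro x y z hx hy hz
  have hw : ∑ l, (y l - R.mulVec x l + z l / ρ) ≤ D - ∑ l, R.mulVec x l := by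
    rw [← sum_sub_distrib]
    exact sum_le_sum fun l _ => by
      have := div_le_div_of_nonneg_right (hz l) hρ.le
      linarith [hy l]
  have hpen := neg_mul_sum_sub_le_half_mul_sum_sq univ hρ (β * C)
    fun l => y l - R.mulVec x l + z l / ρ
  have hβC : β * C * (∑ l, R.mulVec x l - D)
      ≤ -(β * C * ∑ l, (y l - R.mulVec x l + z l / ρ)) := by
    rw [← mul_neg]
    exact mul_le_mul_of_nonneg_left (by linarith) (mul_nonneg hβ hC)
  have hβx : β * ∑ i, x i ≤ β * C * ∑ l, R.mulVec x l := by
    rw [mul_assoc]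
    exact mul_le_mul_of_nonneg_left (hmass x hx) hβ
  rw [card_univ] at hpen
  linarith

theorem le_of_sqrt_sum_sq_le {ι : Type*} [Fintype ι] {z : ι → ℝ} {M : ℝ}
    (hz : Real.sqrt (∑ l, z l ^ 2) ≤ M) (l : ι) : z l ≤ M :=
  calc z l ≤ |z l| := le_abs_self _
    _ = Real.sqrt (z l ^ 2) := (Real.sqrt_sq_eq_abs _).symm
    _ ≤ Real.sqrt (∑ l, z l ^ 2) :=
        Real.sqrt_le_sqrt (single_le_sum (fun l _ => sq_nonneg (z l)) (mem_univ l))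
    _ ≤ M := hz

theorem stmt10_general (L P K : ℕ)
    (R : Matrix (Fin L) (Fin P) ℝ)
    (hRpos : ∀ l i, 0 ≤ R l i) (hRcol : ∀ i, ∃ l, R l i ≠ 0)
    (ρ α β : ℝ) (hρ : 0 < ρ) (hα : 0 < α) (hβ : 0 < β)
    (c : Fin L → ℝ) (hc : ∀ l, 0 < c l)
    (blk : Fin P → Fin K)
    (s : Fin K → ℝ) (hs : ∀ k, 0 < s k)
    (f : (Fin P → ℝ) → ℝ)
    (hf : ∀ x, f x = ∑ k,
      (-β * Real.log (∑ i ∈ Finset.univ.filter (fun i => blk i = k), x i)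
        + s k / (∑ i ∈ Finset.univ.filter (fun i => blk i = k), x i)))
    (g : (Fin L → ℝ) → ℝ)
    (hg : ∀ y, g y = α * ⨆ l : Fin L, y l / c l) :
    (∀ M : ℝ, 0 < M →
      ∃ B : ℝ, ∀ (x : Fin P → ℝ) (y z : Fin L → ℝ),
        (∀ i, 0 ≤ x i) →
        (∀ k, 0 < ∑ i ∈ Finset.univ.filter (fun i => blk i = k), x i) →
        (∀ l, 0 ≤ y l ∧ y l ≤ c l) →
        Real.sqrt (∑ l, z l ^ 2) ≤ M →
        B ≤ f x + g y + (ρ / 2) * (∑ l, (y l - R.mulVec x l + z l / ρ) ^ 2)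
            - (∑ l, z l ^ 2) / (2 * ρ)) ∧
    (∀ (X : ℕ → Fin P → ℝ) (Y Z : ℕ → Fin L → ℝ) (M : ℝ),
      (∀ j i, 0 ≤ X j i) →
      (∀ j k, 0 < ∑ i ∈ Finset.univ.filter (fun i => blk i = k), X j i) →
      (∀ j l, 0 ≤ Y j l ∧ Y j l ≤ c l) →
      (∀ j, Real.sqrt (∑ l, Z j l ^ 2) ≤ M) →
      ∃ B : ℝ, ∀ j, B ≤ f (X j) + g (Y j)
        + (∑ l, Z j l * (Y j l - R.mulVec (X j) l))
        + (ρ / 2) * (∑ l, (Y j l - R.mulVec (X j) l) ^ 2)) := by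
  have key : ∀ M : ℝ, ∃ B : ℝ, ∀ (x : Fin P → ℝ) (y z : Fin L → ℝ),
      (∀ i, 0 ≤ x i) → (∀ k, 0 < ∑ i ∈ Finset.univ.filter (fun i => blk i = k), x i) →
      (∀ l, 0 ≤ y l ∧ y l ≤ c l) → Real.sqrt (∑ l, z l ^ 2) ≤ M →
      B ≤ f x + g y + (ρ / 2) * (∑ l, (y l - R.mulVec x l + z l / ρ) ^ 2)
        - (∑ l, z l ^ 2) / (2 * ρ) := by
    intro M
    obtain ⟨A, hA⟩ := R.exists_mul_sum_add_le_half_mul_sum_sq hRpos hRcol hρ c M hβ.le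
    refine ⟨A - M ^ 2 / (2 * ρ), fun x y z hx hblock hy hz => ?_⟩
    have hfx : -(β * ∑ i, x i) ≤ f x :=
      hf x ▸ neg_mul_sum_le_sum_neg_mul_log_add_div blk hβ.le (fun k => (hs k).le) hblock
    have hgy : 0 ≤ g y :=
      hg y ▸ mul_nonneg hα.le (Real.iSup_nonneg fun l => div_nonneg (hy l).1 (hc l).le)
    have hpen := hA x y z hx (fun l => (hy l).2) (le_of_sqrt_sum_sq_le hz)
    have hzM : (∑ l, z l ^ 2) / (2 * ρ) ≤ M ^ 2 / (2 * ρ) := by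
      gcongr
      exact (Real.sqrt_le_iff.1 hz).2
    linarith
  refine ⟨fun M _ => key M, fun X Y Z M hX hXblock hY hZ => ?_⟩
  obtain ⟨B, hB⟩ := key M
  refine ⟨B, fun j => ?_⟩
  rw [add_assoc, sum_mul_add_half_mul_sum_sq_eq univ hρ.ne']
  linarith [hB (X j) (Y j) (Z j) (hX j) (hXblock j) (hY j) (hZ j)]

/-- Proposition 1 of the paper: lower boundedness of the augmented Lagrangian.
With `f(x) = Σₖ (−β log(block-sum) + sₖ/(block-sum))` and `g(y) = α maxₗ yₗ/cₗ`,
the function `f(x) + g(y) + (ρ/2)‖y − Rx + z/ρ‖² − ‖z‖²/(2ρ)` is bounded below on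
feasible `x`, box-constrained `y`, and norm-bounded `z`; in particular the
augmented Lagrangian values along such sequences are bounded below. -/
theorem stmt10 (L P K : ℕ) (hL : 0 < L)
    (R : Matrix (Fin L) (Fin P) ℝ)
    (hRpos : ∀ l i, 0 ≤ R l i) (hRcol : ∀ i, ∃ l, R l i ≠ 0)
    (ρ α β : ℝ) (hρ : 0 < ρ) (hα : 0 < α) (hβ : 0 < β)
    (c : Fin L → ℝ) (hc : ∀ l, 0 < c l)
    (blk : Fin P → Fin K) (hblk : Function.Surjective blk)
    (s : Fin K → ℝ) (hs : ∀ k, 0 < s k)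
    (f : (Fin P → ℝ) → ℝ)
    (hf : ∀ x, f x = ∑ k,
      (-β * Real.log (∑ i ∈ Finset.univ.filter (fun i => blk i = k), x i)
        + s k / (∑ i ∈ Finset.univ.filter (fun i => blk i = k), x i)))
    (g : (Fin L → ℝ) → ℝ)
    (hg : ∀ y, g y = α * ⨆ l : Fin L, y l / c l) :
    (∀ M : ℝ, 0 < M →
      ∃ B : ℝ, ∀ (x : Fin P → ℝ) (y z : Fin L → ℝ),
        (∀ i, 0 ≤ x i) →
        (∀ k, 0 < ∑ i ∈ Finset.univ.filter (fun i => blk i = k), x i) →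
        (∀ l, 0 ≤ y l ∧ y l ≤ c l) →
        Real.sqrt (∑ l, z l ^ 2) ≤ M →
        B ≤ f x + g y + (ρ / 2) * (∑ l, (y l - R.mulVec x l + z l / ρ) ^ 2)
            - (∑ l, z l ^ 2) / (2 * ρ)) ∧
    (∀ (X : ℕ → Fin P → ℝ) (Y Z : ℕ → Fin L → ℝ) (M : ℝ),
      (∀ j i, 0 ≤ X j i) →
      (∀ j k, 0 < ∑ i ∈ Finset.univ.filter (fun i => blk i = k), X j i) →
      (∀ j l, 0 ≤ Y j l ∧ Y j l ≤ c l) →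
      (∀ j, Real.sqrt (∑ l, Z j l ^ 2) ≤ M) →
      ∃ B : ℝ, ∀ j, B ≤ f (X j) + g (Y j)
        + (∑ l, Z j l * (Y j l - R.mulVec (X j) l))
        + (ρ / 2) * (∑ l, (Y j l - R.mulVec (X j) l) ^ 2)) :=
  stmt10_general L P K R hRpos hRcol ρ α β hρ hα hβ c hc blk s hs f hf g hg
end

section
/- Let R be an L×P real matrix with operator norm ‖R‖, let ρ > 0 and μ > 0, let y, w ∈ ℝ^L, and define h(x) = (ρ/2)·‖y − Rx + w‖². Let X ⊆ ℝ^P be any set, let f : ℝ^P → ℝ, let x₀ ∈ X, and suppose x⁺ ∈ X minimizes the function x ↦ f(x) + ⟨∇h(x₀), x − x₀⟩ + (μ/2)·‖x − x₀‖² over X. Then f(x₀) + h(x₀) − f(x⁺) − h(x⁺) ≥ ((μ − ρ·‖R‖²)/2)·‖x⁺ − x₀‖². -/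
/-!
Taking `x = x₀` in the minimality of `x⁺` gives
`f(x⁺) + ⟨∇h(x₀), x⁺ − x₀⟩ + (μ/2)‖x⁺ − x₀‖² ≤ f(x₀)`. Since `h` is quadratic,
`h(x₀ + d) = h(x₀) + ⟨∇h(x₀), d⟩ + (ρ/2)‖R d‖²` exactly, and `‖R d‖ ≤ ‖R‖‖d‖` turns this into the
descent inequality with constant `ρ‖R‖²`. Adding the two inequalities gives the estimate.
-/

open scoped RealInnerProductSpace

section LeastSquares

variable {E F : Type*} [NormedAddCommGroup E] [InnerProductSpace ℝ E] [CompleteSpace E]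
  [NormedAddCommGroup F] [InnerProductSpace ℝ F] [CompleteSpace F]

theorem hasGradientAt_half_mul_norm_sub_apply_sq (ρ : ℝ) (R : E →L[ℝ] F) (b : F) (x : E) :
    HasGradientAt (fun x => ρ / 2 * ‖b - R x‖ ^ 2) (-ρ • R.adjoint (b - R x)) x := by
  rw [hasGradientAt_iff_hasFDerivAt]
  refine ((R.hasFDerivAt.const_sub b).norm_sq.const_mul (ρ / 2)).congr_fderiv ?_
  ext d
  simp only [smul_apply, neg_apply, ContinuousLinearMap.comp_apply,
    InnerProductSpace.toDual_apply_apply, innerSL_apply_apply, real_inner_smul_left,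
    ContinuousLinearMap.adjoint_inner_left, inner_neg_right, smul_eq_mul, nsmul_eq_mul]
  ring

theorem half_mul_norm_sub_apply_sq_eq (ρ : ℝ) (R : E →L[ℝ] F) (b : F) (x x' : E) :
    ρ / 2 * ‖b - R x'‖ ^ 2 = ρ / 2 * ‖b - R x‖ ^ 2 + ⟪-ρ • R.adjoint (b - R x), x' - x⟫
      + ρ / 2 * ‖R (x' - x)‖ ^ 2 := by
  have hsplit : b - R x' = (b - R x) - R (x' - x) := by rw [map_sub]; abel
  rw [hsplit, norm_sub_sq_real, real_inner_smul_left, ContinuousLinearMap.adjoint_inner_left]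
  ring

theorem half_mul_norm_sub_apply_sq_le {ρ : ℝ} (hρ : 0 ≤ ρ) (R : E →L[ℝ] F) (b : F) (x x' : E) :
    ρ / 2 * ‖b - R x'‖ ^ 2 ≤ ρ / 2 * ‖b - R x‖ ^ 2
      + ⟪gradient (fun x => ρ / 2 * ‖b - R x‖ ^ 2) x, x' - x⟫ + ρ * ‖R‖ ^ 2 / 2 * ‖x' - x‖ ^ 2 := by
  have hop : ‖R (x' - x)‖ ^ 2 ≤ ‖R‖ ^ 2 * ‖x' - x‖ ^ 2 := by
    rw [← mul_pow]
    exact pow_le_pow_left₀ (norm_nonneg _) (R.le_opNorm _) 2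
  rw [(hasGradientAt_half_mul_norm_sub_apply_sq ρ R b x).gradient,
    half_mul_norm_sub_apply_sq_eq ρ R b x x']
  nlinarith

end LeastSquares

theorem sufficient_decrease_of_descent {E : Type*} [NormedAddCommGroup E] [InnerProductSpace ℝ E]
    {f h : E → ℝ} {g x₀ xp : E} {μ Lh : ℝ}
    (hmin : f xp + ⟪g, xp - x₀⟫ + μ / 2 * ‖xp - x₀‖ ^ 2 ≤ f x₀)
    (hdesc : h xp ≤ h x₀ + ⟪g, xp - x₀⟫ + Lh / 2 * ‖xp - x₀‖ ^ 2) :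
    f x₀ + h x₀ - f xp - h xp ≥ (μ - Lh) / 2 * ‖xp - x₀‖ ^ 2 := by
  linarith

theorem stmt12_general (L P : ℕ) (ρ μ : ℝ) (hρ : 0 < ρ)
    (R : EuclideanSpace ℝ (Fin P) →L[ℝ] EuclideanSpace ℝ (Fin L))
    (y w : EuclideanSpace ℝ (Fin L))
    (h : EuclideanSpace ℝ (Fin P) → ℝ)
    (hh : ∀ x, h x = (ρ / 2) * ‖y - R x + w‖ ^ 2)
    (X : Set (EuclideanSpace ℝ (Fin P))) (f : EuclideanSpace ℝ (Fin P) → ℝ)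
    (x₀ : EuclideanSpace ℝ (Fin P)) (hx₀ : x₀ ∈ X)
    (xp : EuclideanSpace ℝ (Fin P))
    (hmin : ∀ x ∈ X,
      f xp + ⟪gradient h x₀, xp - x₀⟫ + (μ / 2) * ‖xp - x₀‖ ^ 2
        ≤ f x + ⟪gradient h x₀, x - x₀⟫ + (μ / 2) * ‖x - x₀‖ ^ 2) :
    f x₀ + h x₀ - f xp - h xp ≥ ((μ - ρ * ‖R‖ ^ 2) / 2) * ‖xp - x₀‖ ^ 2 := by
  have h_eq : h = fun x => ρ / 2 * ‖(y + w) - R x‖ ^ 2 := by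
    funext x
    rw [hh, sub_add_eq_add_sub, add_sub_right_comm]
  have hdesc : h xp ≤ h x₀ + ⟪gradient h x₀, xp - x₀⟫ + ρ * ‖R‖ ^ 2 / 2 * ‖xp - x₀‖ ^ 2 := by
    rw [h_eq]
    exact half_mul_norm_sub_apply_sq_le hρ.le R (y + w) x₀ xp
  have hmin₀ : f xp + ⟪gradient h x₀, xp - x₀⟫ + μ / 2 * ‖xp - x₀‖ ^ 2 ≤ f x₀ := by
    simpa using hmin x₀ hx₀
  exact sufficient_decrease_of_descent hmin₀ hdesc

/-- Sufficient-decrease estimate (34) for the linearized proximal x-update: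
if `x⁺` minimizes `x ↦ f(x) + ⟨∇h(x₀), x − x₀⟩ + (μ/2)‖x − x₀‖²` over `X`, where
`h(x) = (ρ/2)‖y − Rx + w‖²`, then
`f(x₀) + h(x₀) − f(x⁺) − h(x⁺) ≥ ((μ − ρ‖R‖²)/2)‖x⁺ − x₀‖²`. -/
theorem stmt12 (L P : ℕ) (ρ μ : ℝ) (hρ : 0 < ρ) (hμ : 0 < μ)
    (R : EuclideanSpace ℝ (Fin P) →L[ℝ] EuclideanSpace ℝ (Fin L))
    (y w : EuclideanSpace ℝ (Fin L))
    (h : EuclideanSpace ℝ (Fin P) → ℝ)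
    (hh : ∀ x, h x = (ρ / 2) * ‖y - R x + w‖ ^ 2)
    (X : Set (EuclideanSpace ℝ (Fin P))) (f : EuclideanSpace ℝ (Fin P) → ℝ)
    (x₀ : EuclideanSpace ℝ (Fin P)) (hx₀ : x₀ ∈ X)
    (xp : EuclideanSpace ℝ (Fin P)) (hxp : xp ∈ X)
    (hmin : ∀ x ∈ X,
      f xp + ⟪gradient h x₀, xp - x₀⟫ + (μ / 2) * ‖xp - x₀‖ ^ 2
        ≤ f x + ⟪gradient h x₀, x - x₀⟫ + (μ / 2) * ‖x - x₀‖ ^ 2) :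
    f x₀ + h x₀ - f xp - h xp ≥ ((μ - ρ * ‖R‖ ^ 2) / 2) * ‖xp - x₀‖ ^ 2 :=
  stmt12_general L P ρ μ hρ R y w h hh X f x₀ hx₀ xp hmin
end

section
/- Let R be an L×P real matrix with operator norm ‖R‖, let ρ > 0 and μ > 0, let X ⊆ ℝ^P be any set, let Y ⊆ ℝ^L be a convex set, let f : ℝ^P → ℝ be any function, and let g : ℝ^L → ℝ be a convex function. Define L_ρ(x, y; z) = f(x) + g(y) + ⟨z, y − Rx⟩ + (ρ/2)·‖y − Rx‖². Suppose xʲ ∈ X, yʲ ∈ Y, zʲ ∈ ℝ^L, and: (i) x^{j+1} minimizes x ↦ f(x) + ⟨∇h(xʲ), x − xʲ⟩ + (μ/2)·‖x − xʲ‖² over X, where h(x) = (ρ/2)·‖yʲ − Rx + zʲ/ρ‖²; (ii) y^{j+1} minimizes y ↦ g(y) + (ρ/2)·‖y − Rx^{j+1} + zʲ/ρ‖² over Y; (iii) z^{j+1} = zʲ + ρ·(y^{j+1} − Rx^{j+1}). Then L_ρ(xʲ, yʲ; zʲ) − L_ρ(x^{j+1}, y^{j+1}; z^{j+1}) + (1/ρ)·‖z^{j+1}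 − zʲ‖² ≥ ((μ − ρ·‖R‖²)/2)·‖x^{j+1} − xʲ‖² + (ρ/2)·‖y^{j+1} − yʲ‖². -/
/-!
The x-update minimizes `f` plus the linearization of the coupling term `h` plus a proximal term;
since `h` is a quadratic whose curvature is at most `ρ‖R‖²`, comparing with the candidate `xʲ`
gives a decrease of `f + h` by `(μ - ρ‖R‖²)/2 · ‖x^{j+1} - xʲ‖²`. The y-update minimizes a
`ρ`-strongly convex function over the convex set `Y`, so its value at `yʲ` exceeds the minimum by
at least `ρ/2 · ‖y^{j+1} - yʲ‖²`. Completing the square turns both objectives into the augmented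
Lagrangian, and the dual step changes the Lagrangian by exactly `(1/ρ)‖z^{j+1} - zʲ‖²`.
-/

open scoped RealInnerProductSpace
open Filter Topology

section UniformConvex

variable {E : Type*} [NormedAddCommGroup E] [NormedSpace ℝ E]
  {s : Set E} {φ : ℝ → ℝ} {f : E → ℝ} {x y : E}

lemma UniformConvexOn.add_le_of_isMinOn (hf : UniformConvexOn s φ f) (hmin : IsMinOn f s x)
    (hx : x ∈ s) (hy : y ∈ s) : f x + φ ‖x - y‖ ≤ f y := by
  have hsegment : ∀ t ∈ Set.Ioo (0 : ℝ) 1, f x + (1 - t) * φ ‖x - y‖ ≤ f y := by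
    rintro t ⟨ht0, ht1⟩
    have hmem : (1 - t) • x + t • y ∈ s := hf.1 hx hy (by linarith) ht0.le (by ring)
    have hle := (isMinOn_iff.mp hmin _ hmem).trans
      (hf.2 hx hy (by linarith) ht0.le (by ring))
    rw [smul_eq_mul, smul_eq_mul] at hle
    refine le_of_mul_le_mul_left ?_ ht0
    linarith
  have hlim : Tendsto (fun t : ℝ => f x + (1 - t) * φ ‖x - y‖) (𝓝[>] 0)
      (𝓝 (f x + φ ‖x - y‖)) := by
    have hcont : Continuous fun t : ℝ => f x + (1 - t) * φ ‖x - y‖ := by fun_prop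
    simpa using (hcont.tendsto 0).mono_left nhdsWithin_le_nhds
  exact le_of_tendsto hlim (eventually_of_mem (Ioo_mem_nhdsGT one_pos) hsegment)

lemma StrongConvexOn.add_le_of_isMinOn {m : ℝ} (hf : StrongConvexOn s m f)
    (hmin : IsMinOn f s x) (hx : x ∈ s) (hy : y ∈ s) : f x + m / 2 * ‖x - y‖ ^ 2 ≤ f y :=
  UniformConvexOn.add_le_of_isMinOn hf hmin hx hy

end UniformConvex

section InnerProduct

variable {E F : Type*} [NormedAddCommGroup E] [InnerProductSpace ℝ E]
  [NormedAddCommGroup F] [InnerProductSpace ℝ F]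

lemma norm_smul_add_smul_sub_sq {a b : ℝ} (hab : a + b = 1) (x y c : F) :
    ‖a • x + b • y - c‖ ^ 2 = a * ‖x - c‖ ^ 2 + b * ‖y - c‖ ^ 2 - a * b * ‖x - y‖ ^ 2 := by
  obtain rfl : b = 1 - a := by linarith
  have hxy : x - y = (x - c) - (y - c) := by abel
  have hcomb : a • x + (1 - a) • y - c = a • (x - c) + (1 - a) • (y - c) := by module
  rw [hcomb, hxy]
  generalize x - c = u, y - c = v
  rw [norm_add_sq_real, norm_sub_sq_real, norm_smul, norm_smul, mul_pow, mul_pow,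
    Real.norm_eq_abs, Real.norm_eq_abs, sq_abs, sq_abs, real_inner_smul_left,
    real_inner_smul_right]
  ring

lemma ConvexOn.strongConvexOn_add_half_mul_norm_sub_sq {s : Set F} {g : F → ℝ}
    (hg : ConvexOn ℝ s g) (m : ℝ) (c : F) :
    StrongConvexOn s m fun y => g y + m / 2 * ‖y - c‖ ^ 2 := by
  refine ⟨hg.1, fun x hx y hy a b ha hb hab => ?_⟩
  have hgxy := hg.2 hx hy ha hb hab
  simp only [smul_eq_mul] at hgxy ⊢
  rw [norm_smul_add_smul_sub_sq hab]
  linear_combination hgxy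

lemma half_mul_norm_add_inv_smul_sq {ρ : ℝ} (hρ : ρ ≠ 0) (a z : F) :
    ρ / 2 * ‖a + ρ⁻¹ • z‖ ^ 2 = ⟪z, a⟫ + ρ / 2 * ‖a‖ ^ 2 + ‖z‖ ^ 2 / (2 * ρ) := by
  rw [norm_add_sq_real, real_inner_smul_right, norm_smul, mul_pow, Real.norm_eq_abs, sq_abs,
    real_inner_comm]
  field_simp
  ring

variable [CompleteSpace E]

lemma inner_gradient_half_mul_norm_sub_sq (ρ : ℝ) (R : E →L[ℝ] F) (w : F) (x d : E) :
    ⟪gradient (fun x => ρ / 2 * ‖w - R x‖ ^ 2) x, d⟫ = -(ρ * ⟪w - R x, R d⟫) := by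
  have hderiv : HasFDerivAt (fun x => ρ / 2 * ‖w - R x‖ ^ 2) _ x :=
    (((hasFDerivAt_const w x).sub R.hasFDerivAt).norm_sq).const_mul (ρ / 2)
  rw [inner_gradient_left, hderiv.fderiv]
  simp only [smul_apply, ContinuousLinearMap.coe_comp, Function.comp_apply,
    zero_sub, innerSL_apply_apply, smul_eq_mul, nsmul_eq_mul, Pi.sub_apply,
    neg_apply, inner_neg_right]
  ring

/-- Descent lemma for the quadratic `x ↦ ρ/2 ‖w - R x‖²`, whose gradient is `ρ‖R‖²`-Lipschitz. -/
lemma half_mul_norm_sub_sq_le_linearization {ρ : ℝ} (hρ : 0 ≤ ρ) (R : E →L[ℝ] F) (w : F)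
    (x y : E) :
    ρ / 2 * ‖w - R y‖ ^ 2 ≤ ρ / 2 * ‖w - R x‖ ^ 2
      + ⟪gradient (fun x => ρ / 2 * ‖w - R x‖ ^ 2) x, y - x⟫
      + ρ * ‖R‖ ^ 2 / 2 * ‖y - x‖ ^ 2 := by
  have hsplit : w - R y = (w - R x) - R (y - x) := by rw [map_sub]; abel
  have hR : ‖R (y - x)‖ ^ 2 ≤ ‖R‖ ^ 2 * ‖y - x‖ ^ 2 := by
    rw [← mul_pow]; exact pow_le_pow_left₀ (norm_nonneg _) (R.le_opNorm _) 2
  rw [inner_gradient_half_mul_norm_sub_sq, hsplit, norm_sub_sq_real]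
  linarith [mul_le_mul_of_nonneg_left hR (by positivity : 0 ≤ ρ / 2)]

end InnerProduct

theorem stmt15_general (L P : ℕ) (ρ μ : ℝ) (hρ : 0 < ρ)
    (R : EuclideanSpace ℝ (Fin P) →L[ℝ] EuclideanSpace ℝ (Fin L))
    (X : Set (EuclideanSpace ℝ (Fin P))) (Y : Set (EuclideanSpace ℝ (Fin L)))
    (hY : Convex ℝ Y)
    (f : EuclideanSpace ℝ (Fin P) → ℝ) (g : EuclideanSpace ℝ (Fin L) → ℝ)
    (hg : ConvexOn ℝ Set.univ g)
    (xj xj1 : EuclideanSpace ℝ (Fin P)) (yj yj1 zj zj1 : EuclideanSpace ℝ (Fin L))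
    (hxj : xj ∈ X) (hyj : yj ∈ Y) (hyj1 : yj1 ∈ Y)
    (h : EuclideanSpace ℝ (Fin P) → ℝ)
    (hh : ∀ x, h x = (ρ / 2) * ‖yj - R x + ρ⁻¹ • zj‖ ^ 2)
    (hxmin : ∀ x ∈ X,
      f xj1 + ⟪gradient h xj, xj1 - xj⟫ + (μ / 2) * ‖xj1 - xj‖ ^ 2
        ≤ f x + ⟪gradient h xj, x - xj⟫ + (μ / 2) * ‖x - xj‖ ^ 2)
    (hymin : ∀ y ∈ Y,
      g yj1 + (ρ / 2) * ‖yj1 - R xj1 + ρ⁻¹ • zj‖ ^ 2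
        ≤ g y + (ρ / 2) * ‖y - R xj1 + ρ⁻¹ • zj‖ ^ 2)
    (hz : zj1 = zj + ρ • (yj1 - R xj1)) :
    (f xj + g yj + ⟪zj, yj - R xj⟫ + (ρ / 2) * ‖yj - R xj‖ ^ 2)
      - (f xj1 + g yj1 + ⟪zj1, yj1 - R xj1⟫ + (ρ / 2) * ‖yj1 - R xj1‖ ^ 2)
      + (1 / ρ) * ‖zj1 - zj‖ ^ 2
    ≥ ((μ - ρ * ‖R‖ ^ 2) / 2) * ‖xj1 - xj‖ ^ 2 + (ρ / 2) * ‖yj1 - yj‖ ^ 2 := by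
  have hquad : h = fun x => ρ / 2 * ‖(yj + ρ⁻¹ • zj) - R x‖ ^ 2 := by
    funext x; rw [hh]; congr 3; abel
  have hdescent :
      h xj1 ≤ h xj + ⟪gradient h xj, xj1 - xj⟫ + ρ * ‖R‖ ^ 2 / 2 * ‖xj1 - xj‖ ^ 2 := by
    rw [hquad]; exact half_mul_norm_sub_sq_le_linearization hρ.le R _ xj xj1
  have hxstep := hxmin xj hxj
  rw [sub_self, inner_zero_right, norm_zero] at hxstep
  have hshift : ∀ y, y - (R xj1 - ρ⁻¹ • zj) = y - R xj1 + ρ⁻¹ • zj := fun y => by abel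
  have hystep := ((hg.subset (Set.subset_univ Y) hY).strongConvexOn_add_half_mul_norm_sub_sq ρ
    (R xj1 - ρ⁻¹ • zj)).add_le_of_isMinOn
      (isMinOn_iff.mpr fun y hy => by simpa only [hshift] using hymin y hy) hyj1 hyj
  simp only [hshift] at hystep
  have hexpand_h x := (hh x).trans (half_mul_norm_add_inv_smul_sq hρ.ne' (yj - R x) zj)
  have hexpand_y y := half_mul_norm_add_inv_smul_sq hρ.ne' (y - R xj1) zj
  have hinner : ⟪zj1, yj1 - R xj1⟫ = ⟪zj, yj1 - R xj1⟫ + ρ * ‖yj1 - R xj1‖ ^ 2 := by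
    rw [hz, inner_add_left, real_inner_smul_left, real_inner_self_eq_norm_sq]
  have hdual : 1 / ρ * ‖zj1 - zj‖ ^ 2 = ρ * ‖yj1 - R xj1‖ ^ 2 := by
    rw [hz, add_sub_cancel_left, norm_smul, mul_pow, Real.norm_eq_abs, sq_abs]
    field_simp
  linarith [hexpand_h xj, hexpand_h xj1, hexpand_y yj, hexpand_y yj1]

/-- Lemma 5 of the paper: sufficient-decrease inequality for one iteration of the
proximal-linearized nonconvex ADMM with augmented Lagrangian
`L_ρ(x, y; z) = f(x) + g(y) + ⟨z, y − Rx⟩ + (ρ/2)‖y − Rx‖²`. -/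
theorem stmt15 (L P : ℕ) (ρ μ : ℝ) (hρ : 0 < ρ) (hμ : 0 < μ)
    (R : EuclideanSpace ℝ (Fin P) →L[ℝ] EuclideanSpace ℝ (Fin L))
    (X : Set (EuclideanSpace ℝ (Fin P))) (Y : Set (EuclideanSpace ℝ (Fin L)))
    (hY : Convex ℝ Y)
    (f : EuclideanSpace ℝ (Fin P) → ℝ) (g : EuclideanSpace ℝ (Fin L) → ℝ)
    (hg : ConvexOn ℝ Set.univ g)
    (xj xj1 : EuclideanSpace ℝ (Fin P)) (yj yj1 zj zj1 : EuclideanSpace ℝ (Fin L))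
    (hxj : xj ∈ X) (hyj : yj ∈ Y) (hxj1 : xj1 ∈ X) (hyj1 : yj1 ∈ Y)
    (h : EuclideanSpace ℝ (Fin P) → ℝ)
    (hh : ∀ x, h x = (ρ / 2) * ‖yj - R x + ρ⁻¹ • zj‖ ^ 2)
    (hxmin : ∀ x ∈ X,
      f xj1 + ⟪gradient h xj, xj1 - xj⟫ + (μ / 2) * ‖xj1 - xj‖ ^ 2
        ≤ f x + ⟪gradient h xj, x - xj⟫ + (μ / 2) * ‖x - xj‖ ^ 2)
    (hymin : ∀ y ∈ Y,
      g yj1 + (ρ / 2) * ‖yj1 - R xj1 + ρ⁻¹ • zj‖ ^ 2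
        ≤ g y + (ρ / 2) * ‖y - R xj1 + ρ⁻¹ • zj‖ ^ 2)
    (hz : zj1 = zj + ρ • (yj1 - R xj1)) :
    (f xj + g yj + ⟪zj, yj - R xj⟫ + (ρ / 2) * ‖yj - R xj‖ ^ 2)
      - (f xj1 + g yj1 + ⟪zj1, yj1 - R xj1⟫ + (ρ / 2) * ‖yj1 - R xj1‖ ^ 2)
      + (1 / ρ) * ‖zj1 - zj‖ ^ 2
    ≥ ((μ - ρ * ‖R‖ ^ 2) / 2) * ‖xj1 - xj‖ ^ 2 + (ρ / 2) * ‖yj1 - yj‖ ^ 2 :=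
  stmt15_general L P ρ μ hρ R X Y hY f g hg xj xj1 yj yj1 zj zj1 hxj hyj hyj1 h hh hxmin hymin hz
end
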